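/- arXiv:1208.0463 — 4 statements merged into one kernel-verified Lean document; each statement's English description precedes it below -/
import Mathlib

section
/- Let z ~ N(ν, Q) with Q symmetric positive semidefinite, let ε₂ ~ N(0, R) independent of z with R symmetric positive definite, let 0 ≤ γ < 1, and set K = (1−γ) Q H'((1−γ) H Q H' + R)⁻¹. Then x = z + K(y + ε₂/√(1−γ) − H z) has distribution N(μ, P) with μ = ν + K(y − Hν) and P = (I − K H) Q. -/
open Matrix MeasureTheory ProbabilityTheory

/-!
Every linear functional `a ⬝ᵥ x` of the update is `b ⬝ᵥ z + d ⬝ᵥ ε₂ + const`, the sum of two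
independent real Gaussians, hence Gaussian with the summed variance. Collecting terms, the
covariance is the Joseph form `(I − KH) Q (I − KH)ᵀ + (1 − γ)⁻¹ K R Kᵀ`, which collapses to
`(I − KH) Q` because `K` solves the gain equation `K ((1 − γ) H Q Hᵀ + R) = (1 − γ) Q Hᵀ`.
-/

/-- A measure on `ℝ^n` is Gaussian with mean `m` and covariance `S` if every linear
functional pushes it to the corresponding one-dimensional Gaussian (Cramér–Wold). -/
def IsGaussianVec {n : ℕ} (π : Measure (Fin n → ℝ)) (m : Fin n → ℝ)
    (S : Matrix (Fin n) (Fin n) ℝ) : Prop :=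
  ∀ a : Fin n → ℝ,
    π.map (fun x => a ⬝ᵥ x) = gaussianReal (a ⬝ᵥ m) (Real.toNNReal (a ⬝ᵥ (S *ᵥ a)))

namespace IsGaussianVec

variable {m n : ℕ} {π₁ : Measure (Fin m → ℝ)} {π₂ : Measure (Fin n → ℝ)} [SFinite π₁] [SFinite π₂]
  {m₁ : Fin m → ℝ} {m₂ : Fin n → ℝ} {S₁ : Matrix (Fin m) (Fin m) ℝ} {S₂ : Matrix (Fin n) (Fin n) ℝ}

lemma map_prod_dotProduct_add_dotProduct (h₁ : IsGaussianVec π₁ m₁ S₁)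
    (h₂ : IsGaussianVec π₂ m₂ S₂) (a : Fin m → ℝ) (b : Fin n → ℝ) :
    (π₁.prod π₂).map (fun x => a ⬝ᵥ x.1 + b ⬝ᵥ x.2) =
      gaussianReal (a ⬝ᵥ m₁ + b ⬝ᵥ m₂)
        ((a ⬝ᵥ (S₁ *ᵥ a)).toNNReal + (b ⬝ᵥ (S₂ *ᵥ b)).toNNReal) := by
  have hsplit : (fun x : (Fin m → ℝ) × (Fin n → ℝ) => a ⬝ᵥ x.1 + b ⬝ᵥ x.2) =
      (fun s : ℝ × ℝ => s.1 + s.2) ∘ Prod.map (a ⬝ᵥ ·) (b ⬝ᵥ ·) := rfl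
  rw [hsplit, ← Measure.map_map (by fun_prop) (by fun_prop),
    ← Measure.map_prod_map _ _ (by fun_prop) (by fun_prop), h₁ a, h₂ b]
  exact gaussianReal_conv_gaussianReal

lemma map_prod_affine (h₁ : IsGaussianVec π₁ m₁ S₁) (h₂ : IsGaussianVec π₂ m₂ S₂)
    (hS₁ : S₁.PosSemidef) (hS₂ : S₂.PosSemidef) {p : ℕ} (A : Matrix (Fin p) (Fin m) ℝ)
    (B : Matrix (Fin p) (Fin n) ℝ) (c : Fin p → ℝ) :
    IsGaussianVec ((π₁.prod π₂).map fun x => A *ᵥ x.1 + B *ᵥ x.2 + c)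
      (A *ᵥ m₁ + B *ᵥ m₂ + c) (A * S₁ * Aᵀ + B * S₂ * Bᵀ) := by
  intro a
  have hcomp : (fun y => a ⬝ᵥ y) ∘ (fun x : (Fin m → ℝ) × (Fin n → ℝ) => A *ᵥ x.1 + B *ᵥ x.2 + c)
      = (· + a ⬝ᵥ c) ∘ fun x => (a ᵥ* A) ⬝ᵥ x.1 + (a ᵥ* B) ⬝ᵥ x.2 := by
    ext x
    simp only [Function.comp_apply, dotProduct_add, dotProduct_mulVec]
  rw [Measure.map_map (by fun_prop) (by fun_prop), hcomp,
    ← Measure.map_map (by fun_prop) (by fun_prop), h₁.map_prod_dotProduct_add_dotProduct h₂,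
    gaussianReal_map_add_const, ← Real.toNNReal_add (by simpa using hS₁.dotProduct_mulVec_nonneg _)
      (by simpa using hS₂.dotProduct_mulVec_nonneg _)]
  congr 2
  · simp only [dotProduct_add, dotProduct_mulVec]
  · simp only [add_mulVec, dotProduct_add, ← mulVec_mulVec, mulVec_transpose, dotProduct_mulVec]

end IsGaussianVec

lemma joseph_form_eq_of_gain_eq {𝕜 ι κ : Type*} [Field 𝕜] [Fintype ι] [Fintype κ]
    [DecidableEq ι] {Q : Matrix ι ι 𝕜} {H : Matrix κ ι 𝕜} {R : Matrix κ κ 𝕜}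
    {K : Matrix ι κ 𝕜} {α : 𝕜} (hα : α ≠ 0)
    (hK : K * (α • (H * Q * Hᵀ) + R) = α • (Q * Hᵀ)) :
    (1 - K * H) * Q * (1 - K * H)ᵀ + α⁻¹ • (K * R * Kᵀ) = (1 - K * H) * Q := by
  have hKR : K * R = α • (Q * Hᵀ - K * (H * Q * Hᵀ)) := by
    rw [smul_sub, ← hK, Matrix.mul_add, Matrix.mul_smul]
    abel
  rw [hKR, Matrix.smul_mul, smul_smul, inv_mul_cancel₀ hα, one_smul, transpose_sub,
    transpose_one, transpose_mul]
  simp only [Matrix.sub_mul, Matrix.mul_sub, Matrix.one_mul, Matrix.mul_one, Matrix.mul_assoc]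
  abel

theorem second_stage_update_distribution_general {q r : ℕ}
    (Q : Matrix (Fin q) (Fin q) ℝ) (H : Matrix (Fin r) (Fin q) ℝ)
    (R : Matrix (Fin r) (Fin r) ℝ)
    (hQ : Q.PosSemidef) (hR : R.PosDef)
    (γ : ℝ) (hγ1 : γ < 1)
    (ν : Fin q → ℝ) (y : Fin r → ℝ)
    (K : Matrix (Fin q) (Fin r) ℝ)
    (hK : K = (1 - γ) • (Q * Hᵀ * ((1 - γ) • (H * Q * Hᵀ) + R)⁻¹))
    (μz : Measure (Fin q → ℝ)) [IsProbabilityMeasure μz]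
    (με : Measure (Fin r → ℝ)) [IsProbabilityMeasure με]
    (hz : IsGaussianVec μz ν Q) (hε : IsGaussianVec με 0 R) :
    IsGaussianVec
      ((μz.prod με).map
        (fun p => p.1 + K *ᵥ (y + (Real.sqrt (1 - γ))⁻¹ • p.2 - H *ᵥ p.1)))
      (ν + K *ᵥ (y - H *ᵥ ν)) ((1 - K * H) * Q) := by
  have hα : 0 < 1 - γ := by linarith
  have hS : ((1 - γ) • (H * Q * Hᵀ) + R).PosDef := by
    have hHQH : (H * Q * Hᵀ).PosSemidef := by simpa using hQ.mul_mul_conjTranspose_same H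
    exact PosDef.posSemidef_add (hHQH.smul hα.le) hR
  have hgain : K * ((1 - γ) • (H * Q * Hᵀ) + R) = (1 - γ) • (Q * Hᵀ) := by
    rw [hK, Matrix.smul_mul, Matrix.mul_assoc, nonsing_inv_mul _ hS.det_pos.ne'.isUnit,
      Matrix.mul_one]
  have hc : (√(1 - γ))⁻¹ * (√(1 - γ))⁻¹ = (1 - γ)⁻¹ := by
    rw [← mul_inv, Real.mul_self_sqrt hα.le]
  have hx : (fun p : (Fin q → ℝ) × (Fin r → ℝ) => p.1 + K *ᵥ (y + (√(1 - γ))⁻¹ • p.2 - H *ᵥ p.1))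
      = fun p => (1 - K * H) *ᵥ p.1 + ((√(1 - γ))⁻¹ • K) *ᵥ p.2 + K *ᵥ y := by
    funext p
    simp only [mulVec_add, mulVec_sub, mulVec_smul, smul_mulVec, sub_mulVec, one_mulVec,
      mulVec_mulVec]
    abel
  rw [hx]
  convert hz.map_prod_affine hε hQ hR.posSemidef (1 - K * H) ((√(1 - γ))⁻¹ • K) (K *ᵥ y) using 1
  · simp only [mulVec_zero, add_zero, mulVec_sub, sub_mulVec, one_mulVec, mulVec_mulVec]
    abel
  · simp only [transpose_smul, Matrix.smul_mul, Matrix.mul_smul, smul_smul, hc]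
    exact (joseph_form_eq_of_gain_eq hα.ne' hgain).symm

/-- If `z ~ N(ν,Q)`, `ε₂ ~ N(0,R)` independent of `z`, and
`K = (1−γ) Q H'((1−γ) H Q H' + R)⁻¹`, then `x = z + K(y + ε₂/√(1−γ) − H z)`
has distribution `N(μ, P)` with `μ = ν + K(y − Hν)` and `P = (I − K H) Q`. -/
theorem second_stage_update_distribution {q r : ℕ}
    (Q : Matrix (Fin q) (Fin q) ℝ) (H : Matrix (Fin r) (Fin q) ℝ)
    (R : Matrix (Fin r) (Fin r) ℝ)
    (hQ : Q.PosSemidef) (hR : R.PosDef)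
    (γ : ℝ) (hγ0 : 0 ≤ γ) (hγ1 : γ < 1)
    (ν : Fin q → ℝ) (y : Fin r → ℝ)
    (K : Matrix (Fin q) (Fin r) ℝ)
    (hK : K = (1 - γ) • (Q * Hᵀ * ((1 - γ) • (H * Q * Hᵀ) + R)⁻¹))
    (μz : Measure (Fin q → ℝ)) [IsProbabilityMeasure μz]
    (με : Measure (Fin r → ℝ)) [IsProbabilityMeasure με]
    (hz : IsGaussianVec μz ν Q) (hε : IsGaussianVec με 0 R) :
    IsGaussianVec
      ((μz.prod με).map
        (fun p => p.1 + K *ᵥ (y + (Real.sqrt (1 - γ))⁻¹ • p.2 - H *ᵥ p.1)))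
      (ν + K *ᵥ (y - H *ᵥ ν)) ((1 - K * H) * Q) :=
  second_stage_update_distribution_general Q H R hQ hR γ hγ1 ν y K hK μz με hz hε
end

section
/- With the notation of the ensemble Kalman particle filter, for γ ∈ (0,1) define the unnormalized weights w_j(γ) = φ(y; H ν_j(γ), H Q_γ H' + R/(1−γ)), where φ is the multivariate Gaussian density, ν_j(γ) = x^p_j + K_γ(y − H x^p_j), Q_γ = (1/γ) K_γ R K_γ', and K_γ = γ P̂ H'(γ H P̂ H' + R)⁻¹. Then as γ → 1⁻, the normalized weights α_j(γ) = w_j(γ)/Σ_k w_k(γ) converge to 1/N for each j. -/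
/-!
The weights share the covariance `Σ_γ = H Q_γ Hᵀ + (1 - γ)⁻¹ R`, so the Gaussian normalising
constant cancels in `α_j`, leaving `exp (-½ d_jᵀ Σ_γ⁻¹ d_j) / ∑ₖ exp (-½ d_kᵀ Σ_γ⁻¹ d_k)` with
`d_j = y - H ν_j(γ)`. As `H P̂ Hᵀ + R` is positive definite, `K_γ`, `Q_γ` and `ν_j(γ)` are
continuous at `γ = 1`, so the `d_j` converge, while `Σ_γ⁻¹ = (1 - γ) ((1 - γ) H Q_γ Hᵀ + R)⁻¹ → 0`.
Hence every exponential tends to `1` and `α_j → 1 / N`.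
-/

open Matrix Filter Topology

/-- The multivariate normal density `φ(x; μ, Σ)`. -/
noncomputable def gpdf {n : ℕ} (x μ : Fin n → ℝ) (S : Matrix (Fin n) (Fin n) ℝ) : ℝ :=
  (2 * Real.pi) ^ (-(n : ℝ) / 2) * S.det ^ (-(1 : ℝ) / 2) *
    Real.exp (-(1 / 2) * ((x - μ) ⬝ᵥ (S⁻¹ *ᵥ (x - μ))))

theorem ContinuousAt.matrix_inv {X 𝕜 n : Type*} [TopologicalSpace X] [Fintype n] [DecidableEq n]
    [Field 𝕜] [TopologicalSpace 𝕜] [IsTopologicalRing 𝕜] [ContinuousInv₀ 𝕜]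
    {A : X → Matrix n n 𝕜} {x : X} (hA : ContinuousAt A x) (h : (A x).det ≠ 0) :
    ContinuousAt (fun y => (A y)⁻¹) x :=
  (continuousAt_matrix_inv _ <| by
    simpa only [Ring.inverse_eq_inv'] using continuousAt_inv₀ h).comp hA

section InflatedCovariance

variable {X n : Type*} [Fintype n] [DecidableEq n] {l : Filter X}
  {B : X → Matrix n n ℝ} {B₀ R : Matrix n n ℝ} {ε : X → ℝ}

theorem eventually_det_add_inv_smul_pos (hB : Tendsto B l (𝓝 B₀)) (hε : Tendsto ε l (𝓝[>] 0))
    (hR : 0 < R.det) : ∀ᶠ t in l, 0 < (B t + (ε t)⁻¹ • R).det := by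
  have hM : Tendsto (fun t => ε t • B t + R) l (𝓝 R) := by
    simpa using ((tendsto_nhds_of_tendsto_nhdsWithin hε).smul hB).add_const R
  filter_upwards [(continuous_id.matrix_det.tendsto R).comp hM |>.eventually (lt_mem_nhds hR),
    eventually_mem_of_tendsto_nhdsWithin hε] with t hdet (hεt : 0 < ε t)
  have : B t + (ε t)⁻¹ • R = (ε t)⁻¹ • (ε t • B t + R) := by
    rw [smul_add, inv_smul_smul₀ hεt.ne']
  rw [this, det_smul]
  exact mul_pos (by positivity) hdet

theorem tendsto_inv_add_inv_smul_zero (hB : Tendsto B l (𝓝 B₀)) (hε : Tendsto ε l (𝓝[>] 0))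
    (hR : R.det ≠ 0) : Tendsto (fun t => (B t + (ε t)⁻¹ • R)⁻¹) l (𝓝 0) := by
  have hε₀ := tendsto_nhds_of_tendsto_nhdsWithin hε
  have hM : Tendsto (fun t => ε t • B t + R) l (𝓝 R) := by simpa using (hε₀.smul hB).add_const R
  have hMinv := ((ContinuousAt.matrix_inv continuousAt_id hR).tendsto).comp hM
  have hlim : Tendsto (fun t => ε t • (ε t • B t + R)⁻¹) l (𝓝 0) := by
    simpa using hε₀.smul hMinv
  refine hlim.congr' ?_
  filter_upwards [(continuous_id.matrix_det.tendsto R).comp hM |>.eventually_ne hR,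
    eventually_mem_of_tendsto_nhdsWithin hε]
    with t (hdet : (ε t • B t + R).det ≠ 0) (hεt : 0 < ε t)
  rw [show B t + (ε t)⁻¹ • R = (ε t)⁻¹ • (ε t • B t + R) by
    rw [smul_add, inv_smul_smul₀ hεt.ne']]
  refine (inv_eq_left_inv ?_).symm
  rw [Matrix.smul_mul, Matrix.mul_smul, smul_smul, mul_inv_cancel₀ hεt.ne', one_smul,
    nonsing_inv_mul _ hdet.isUnit]

end InflatedCovariance

section GaussianWeights

variable {ι : Type*} [Fintype ι] {n : ℕ}

theorem gpdf_div_sum_gpdf (x : Fin n → ℝ) (μ : ι → Fin n → ℝ) {S : Matrix (Fin n) (Fin n) ℝ}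
    (hS : 0 < S.det) (j : ι) :
    gpdf x (μ j) S / ∑ k, gpdf x (μ k) S =
      Real.exp (-(1 / 2) * ((x - μ j) ⬝ᵥ (S⁻¹ *ᵥ (x - μ j)))) /
        ∑ k, Real.exp (-(1 / 2) * ((x - μ k) ⬝ᵥ (S⁻¹ *ᵥ (x - μ k)))) := by
  have hc : 0 < (2 * Real.pi) ^ (-(n : ℝ) / 2) * S.det ^ (-(1 : ℝ) / 2) := by positivity
  simp only [gpdf, ← Finset.mul_sum]
  exact mul_div_mul_left _ _ hc.ne'

theorem tendsto_gpdf_div_sum_gpdf {X : Type*} {l : Filter X} (x : Fin n → ℝ)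
    {μ : X → ι → Fin n → ℝ} {μ₀ : ι → Fin n → ℝ} {S : X → Matrix (Fin n) (Fin n) ℝ}
    (hμ : ∀ k, Tendsto (fun t => μ t k) l (𝓝 (μ₀ k))) (hS : Tendsto (fun t => (S t)⁻¹) l (𝓝 0))
    (hdet : ∀ᶠ t in l, 0 < (S t).det) (j : ι) :
    Tendsto (fun t => gpdf x (μ t j) (S t) / ∑ k, gpdf x (μ t k) (S t)) l
      (𝓝 (1 / Fintype.card ι)) := by
  have hexp : ∀ k, Tendsto (fun t =>
      Real.exp (-(1 / 2) * ((x - μ t k) ⬝ᵥ ((S t)⁻¹ *ᵥ (x - μ t k))))) l (𝓝 1) := by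
    intro k
    have hcont : Continuous fun p : (Fin n → ℝ) × Matrix (Fin n) (Fin n) ℝ =>
        Real.exp (-(1 / 2) * (p.1 ⬝ᵥ (p.2 *ᵥ p.1))) := by fun_prop
    have h := (hcont.tendsto (x - μ₀ k, 0)).comp ((tendsto_const_nhds.sub (hμ k)).prodMk_nhds hS)
    simp only [zero_mulVec, dotProduct_zero, mul_zero, Real.exp_zero] at h
    exact h
  have hsum := tendsto_finsetSum Finset.univ fun k _ => hexp k
  rw [Finset.sum_const, Finset.card_univ, nsmul_one] at hsum
  refine ((hexp j).div hsum (Nat.cast_ne_zero.2 (Fintype.card_pos_iff.2 ⟨j⟩).ne')).congr' ?_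
  filter_upwards [hdet] with t ht
  exact (gpdf_div_sum_gpdf x (μ t) ht j).symm

end GaussianWeights

theorem enkpf_weights_gamma_to_one_general {q r N : ℕ}
    (Phat : Matrix (Fin q) (Fin q) ℝ) (H : Matrix (Fin r) (Fin q) ℝ)
    (R : Matrix (Fin r) (Fin r) ℝ)
    (hP : Phat.PosSemidef) (hR : R.PosDef)
    (xp : Fin N → Fin q → ℝ) (y : Fin r → ℝ)
    (K : ℝ → Matrix (Fin q) (Fin r) ℝ)
    (hK : ∀ γ, K γ = γ • (Phat * Hᵀ * (γ • (H * Phat * Hᵀ) + R)⁻¹))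
    (ν : ℝ → Fin N → Fin q → ℝ)
    (hν : ∀ γ j, ν γ j = xp j + K γ *ᵥ (y - H *ᵥ xp j))
    (Q : ℝ → Matrix (Fin q) (Fin q) ℝ)
    (hQ : ∀ γ, Q γ = γ⁻¹ • (K γ * R * (K γ)ᵀ))
    (w : ℝ → Fin N → ℝ)
    (hw : ∀ γ j, w γ j = gpdf y (H *ᵥ ν γ j) (H * Q γ * Hᵀ + (1 - γ)⁻¹ • R))
    (α : ℝ → Fin N → ℝ)
    (hα : ∀ γ j, α γ j = w γ j / ∑ k, w γ k) :
    ∀ j, Tendsto (fun γ => α γ j) (nhdsWithin 1 (Set.Ioo 0 1)) (nhds (1 / (N : ℝ))) := by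
  intro j
  have hl : 𝓝[Set.Ioo 0 1] (1 : ℝ) ≤ 𝓝 1 := nhdsWithin_le_nhds
  have hSR : (H * Phat * Hᵀ + R).det ≠ 0 := by
    have hS : (H * Phat * Hᵀ).PosSemidef := by
      simpa using hP.mul_mul_conjTranspose_same H
    exact (Matrix.PosDef.posSemidef_add hS hR).det_pos.ne'
  have hKc : ContinuousAt K 1 := by
    have hinv : ContinuousAt (fun γ : ℝ => (γ • (H * Phat * Hᵀ) + R)⁻¹) 1 :=
      ContinuousAt.matrix_inv (by fun_prop) (by simpa using hSR)
    rw [funext hK]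
    fun_prop
  have hQc : ContinuousAt Q 1 := by
    rw [funext hQ]
    fun_prop (disch := norm_num)
  have hμ : ∀ k, ContinuousAt (fun γ => H *ᵥ ν γ k) 1 := by
    simp_rw [hν]
    fun_prop
  have hB := ((by fun_prop : ContinuousAt (fun γ => H * Q γ * Hᵀ) 1).tendsto).mono_left hl
  have hε : Tendsto (fun γ : ℝ => 1 - γ) (𝓝[Set.Ioo 0 1] 1) (𝓝[>] 0) := by
    refine tendsto_nhdsWithin_iff.2 ⟨?_, ?_⟩
    · simpa using ((continuous_sub_left (1 : ℝ)).tendsto 1).mono_left hl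
    · filter_upwards [self_mem_nhdsWithin] with γ hγ
      exact sub_pos.2 hγ.2
  have hlim := tendsto_gpdf_div_sum_gpdf y (fun k => (hμ k).tendsto.mono_left hl)
    (tendsto_inv_add_inv_smul_zero hB hε hR.det_pos.ne')
    (eventually_det_add_inv_smul_pos hB hε hR.det_pos) j
  simpa [hα, hw] using hlim

/-- As `γ → 1⁻`, the normalized EnKPF weights converge to the uniform weights `1/N`. -/
theorem enkpf_weights_gamma_to_one {q r N : ℕ} (hN : 0 < N)
    (Phat : Matrix (Fin q) (Fin q) ℝ) (H : Matrix (Fin r) (Fin q) ℝ)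
    (R : Matrix (Fin r) (Fin r) ℝ)
    (hP : Phat.PosSemidef) (hR : R.PosDef)
    (xp : Fin N → Fin q → ℝ) (y : Fin r → ℝ)
    (K : ℝ → Matrix (Fin q) (Fin r) ℝ)
    (hK : ∀ γ, K γ = γ • (Phat * Hᵀ * (γ • (H * Phat * Hᵀ) + R)⁻¹))
    (ν : ℝ → Fin N → Fin q → ℝ)
    (hν : ∀ γ j, ν γ j = xp j + K γ *ᵥ (y - H *ᵥ xp j))
    (Q : ℝ → Matrix (Fin q) (Fin q) ℝ)
    (hQ : ∀ γ, Q γ = γ⁻¹ • (K γ * R * (K γ)ᵀ))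
    (w : ℝ → Fin N → ℝ)
    (hw : ∀ γ j, w γ j = gpdf y (H *ᵥ ν γ j) (H * Q γ * Hᵀ + (1 - γ)⁻¹ • R))
    (α : ℝ → Fin N → ℝ)
    (hα : ∀ γ j, α γ j = w γ j / ∑ k, w γ k) :
    ∀ j, Tendsto (fun γ => α γ j) (nhdsWithin 1 (Set.Ioo 0 1)) (nhds (1 / (N : ℝ))) :=
  enkpf_weights_gamma_to_one_general Phat H R hP hR xp y K hK ν hν Q hQ w hw α hα
end

section
/- With the same notation, as γ → 0⁺ the normalized weights α_j(γ) = w_j(γ)/Σ_k w_k(γ), where w_j(γ) = φ(y; H ν_j(γ), H Q_γ H' + R/(1−γ)), converge to the particle filter weights φ(y; H x^p_j, R)/Σ_k φ(y; H x^p_k, R). -/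
open Matrix Filter Topology

/-!
Write `K_γ = γ B_γ` with `B_γ = P̂ H'(γ H P̂ H' + R)⁻¹`, which is continuous at `γ = 0` since `R`
is invertible. Then `K_γ → 0`, and `Q_γ = γ B_γ R B_γ'` (the factor `1/γ` cancels against `γ²`)
tends to `0` as well, so the mean `H ν_j(γ)` tends to `H x^p_j` and the covariance
`H Q_γ H' + R/(1-γ)` tends to `R`. The Gaussian density is jointly continuous in mean and
covariance wherever the covariance is invertible, so each weight converges, and since the limit
weights are positive the normalized weights converge too.
-/

theorem continuousAt_gpdf {n : ℕ} (x μ : Fin n → ℝ) {S : Matrix (Fin n) (Fin n) ℝ}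
    (hS : S.det ≠ 0) :
    ContinuousAt (fun p : (Fin n → ℝ) × Matrix (Fin n) (Fin n) ℝ => gpdf x p.1 p.2) (μ, S) := by
  have hinv : ContinuousAt (Inv.inv : Matrix (Fin n) (Fin n) ℝ → _) S :=
    continuousAt_matrix_inv S (by rw [Ring.inverse_eq_inv']; exact continuousAt_inv₀ hS)
  have hinv' : ContinuousAt (fun p : (Fin n → ℝ) × Matrix (Fin n) (Fin n) ℝ => p.2⁻¹) (μ, S) :=
    hinv.comp continuousAt_snd
  have hdet : ContinuousAt
      (fun p : (Fin n → ℝ) × Matrix (Fin n) (Fin n) ℝ => p.2.det ^ (-(1 : ℝ) / 2)) (μ, S) :=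
    continuous_snd.matrix_det.continuousAt.rpow_const (Or.inl hS)
  have hquad : ContinuousAt (fun p : (Fin n → ℝ) × Matrix (Fin n) (Fin n) ℝ =>
      (x - p.1) ⬝ᵥ (p.2⁻¹ *ᵥ (x - p.1))) (μ, S) := by
    fun_prop
  unfold gpdf
  exact (continuousAt_const.mul hdet).mul
    (Real.continuous_exp.continuousAt.comp (continuousAt_const.mul hquad))

theorem tendsto_gpdf {α : Type*} {l : Filter α} {n : ℕ} (x : Fin n → ℝ)
    {f : α → Fin n → ℝ} {S : α → Matrix (Fin n) (Fin n) ℝ} {μ : Fin n → ℝ}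
    {S₀ : Matrix (Fin n) (Fin n) ℝ} (hf : Tendsto f l (𝓝 μ)) (hS : Tendsto S l (𝓝 S₀))
    (hS₀ : S₀.det ≠ 0) :
    Tendsto (fun t => gpdf x (f t) (S t)) l (𝓝 (gpdf x μ S₀)) := by
  -- elaborated against the goal directly, unification unfolds `gpdf` and times out
  have h := (continuousAt_gpdf x μ hS₀).tendsto.comp (hf.prodMk_nhds hS)
  exact h

theorem gpdf_pos {n : ℕ} (x μ : Fin n → ℝ) {S : Matrix (Fin n) (Fin n) ℝ} (hS : 0 < S.det) :
    0 < gpdf x μ S := by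
  unfold gpdf
  have := Real.pi_pos
  positivity

namespace Matrix

variable {𝕜 m n : Type*} [Field 𝕜] [Fintype n]

theorem continuousAt_mul_inv_smul_add [TopologicalSpace 𝕜] [IsTopologicalDivisionRing 𝕜]
    [DecidableEq n] (A : Matrix m n 𝕜) (M : Matrix n n 𝕜) {R : Matrix n n 𝕜} (hR : R.det ≠ 0) :
    ContinuousAt (fun γ : 𝕜 => A * (γ • M + R)⁻¹) 0 := by
  have hinv : ContinuousAt Inv.inv R :=
    continuousAt_matrix_inv R (by rw [Ring.inverse_eq_inv']; exact continuousAt_inv₀ hR)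
  have hinv_add : ContinuousAt (fun γ : 𝕜 => (γ • M + R)⁻¹) 0 :=
    hinv.comp_of_eq (by fun_prop) (by simp)
  fun_prop

theorem inv_smul_smul_mul_mul_transpose_smul (γ : 𝕜) (B : Matrix m n 𝕜) (R : Matrix n n 𝕜) :
    γ⁻¹ • ((γ • B) * R * (γ • B)ᵀ) = γ • (B * R * Bᵀ) := by
  rw [transpose_smul, smul_mul, smul_mul, Matrix.mul_smul, smul_smul, smul_smul, inv_mul_mul_self]

end Matrix

theorem tendsto_div_sum {α ι 𝕜 : Type*} [Fintype ι] [Field 𝕜] [TopologicalSpace 𝕜]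
    [IsTopologicalDivisionRing 𝕜] {l : Filter α} {f : α → ι → 𝕜} {a : ι → 𝕜}
    (hf : ∀ i, Tendsto (fun t => f t i) l (𝓝 (a i))) (ha : ∑ i, a i ≠ 0) (i : ι) :
    Tendsto (fun t => f t i / ∑ k, f t k) l (𝓝 (a i / ∑ k, a k)) :=
  (hf i).div (tendsto_finsetSum _ fun k _ => hf k) ha

theorem enkpf_weights_gamma_to_zero_general {q r N : ℕ} (hN : 0 < N)
    (Phat : Matrix (Fin q) (Fin q) ℝ) (H : Matrix (Fin r) (Fin q) ℝ)
    (R : Matrix (Fin r) (Fin r) ℝ)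
    (hR : R.PosDef)
    (xp : Fin N → Fin q → ℝ) (y : Fin r → ℝ)
    (K : ℝ → Matrix (Fin q) (Fin r) ℝ)
    (hK : ∀ γ, K γ = γ • (Phat * Hᵀ * (γ • (H * Phat * Hᵀ) + R)⁻¹))
    (ν : ℝ → Fin N → Fin q → ℝ)
    (hν : ∀ γ j, ν γ j = xp j + K γ *ᵥ (y - H *ᵥ xp j))
    (Q : ℝ → Matrix (Fin q) (Fin q) ℝ)
    (hQ : ∀ γ, Q γ = γ⁻¹ • (K γ * R * (K γ)ᵀ))
    (w : ℝ → Fin N → ℝ)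
    (hw : ∀ γ j, w γ j = gpdf y (H *ᵥ ν γ j) (H * Q γ * Hᵀ + (1 - γ)⁻¹ • R))
    (α : ℝ → Fin N → ℝ)
    (hα : ∀ γ j, α γ j = w γ j / ∑ k, w γ k) :
    ∀ j, Tendsto (fun γ => α γ j) (nhdsWithin 0 (Set.Ioo 0 1))
      (nhds (gpdf y (H *ᵥ xp j) R / ∑ k, gpdf y (H *ᵥ xp k) R)) := by
  set B : ℝ → Matrix (Fin q) (Fin r) ℝ := fun γ => Phat * Hᵀ * (γ • (H * Phat * Hᵀ) + R)⁻¹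
  have hB : ContinuousAt B 0 := continuousAt_mul_inv_smul_add _ _ hR.det_pos.ne'
  have hK0 : Tendsto K (𝓝 0) (𝓝 0) := by
    have h := tendsto_id.smul hB.tendsto
    rw [zero_smul] at h
    exact h.congr fun γ => (hK γ).symm
  have hmean : ∀ j, Tendsto (fun γ => H *ᵥ ν γ j) (𝓝 0) (𝓝 (H *ᵥ xp j)) := fun j => by
    have hc : Continuous fun M : Matrix (Fin q) (Fin r) ℝ => H *ᵥ (xp j + M *ᵥ (y - H *ᵥ xp j)) :=
      by fun_prop
    simpa [hν, Function.comp_def] using (hc.tendsto 0).comp hK0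
  have hQB : ∀ γ, Q γ = γ • (B γ * R * (B γ)ᵀ) := fun γ => by
    rw [hQ, hK, inv_smul_smul_mul_mul_transpose_smul]
  have hcov : Tendsto (fun γ => H * Q γ * Hᵀ + (1 - γ)⁻¹ • R) (𝓝 0) (𝓝 R) := by
    have h : ContinuousAt (fun γ => H * Q γ * Hᵀ + (1 - γ)⁻¹ • R) 0 := by
      simp only [hQB]
      fun_prop (disch := norm_num)
    convert h.tendsto using 2
    simp [hQB]
  have hweight : ∀ j, Tendsto (fun γ => w γ j) (𝓝 0) (𝓝 (gpdf y (H *ᵥ xp j) R)) := fun j => by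
    simpa only [hw] using tendsto_gpdf y (hmean j) hcov hR.det_pos.ne'
  have hsum : 0 < ∑ k, gpdf y (H *ᵥ xp k) R :=
    Finset.sum_pos (fun k _ => gpdf_pos _ _ hR.det_pos) (Finset.univ_nonempty_iff.2 ⟨⟨0, hN⟩⟩)
  intro j
  simpa only [hα] using (tendsto_div_sum hweight hsum.ne' j).mono_left nhdsWithin_le_nhds

/-- As `γ → 0⁺`, the normalized EnKPF weights converge to the particle filter weights. -/
theorem enkpf_weights_gamma_to_zero {q r N : ℕ} (hN : 0 < N)
    (Phat : Matrix (Fin q) (Fin q) ℝ) (H : Matrix (Fin r) (Fin q) ℝ)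
    (R : Matrix (Fin r) (Fin r) ℝ)
    (hP : Phat.PosSemidef) (hR : R.PosDef)
    (xp : Fin N → Fin q → ℝ) (y : Fin r → ℝ)
    (K : ℝ → Matrix (Fin q) (Fin r) ℝ)
    (hK : ∀ γ, K γ = γ • (Phat * Hᵀ * (γ • (H * Phat * Hᵀ) + R)⁻¹))
    (ν : ℝ → Fin N → Fin q → ℝ)
    (hν : ∀ γ j, ν γ j = xp j + K γ *ᵥ (y - H *ᵥ xp j))
    (Q : ℝ → Matrix (Fin q) (Fin q) ℝ)
    (hQ : ∀ γ, Q γ = γ⁻¹ • (K γ * R * (K γ)ᵀ))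
    (w : ℝ → Fin N → ℝ)
    (hw : ∀ γ j, w γ j = gpdf y (H *ᵥ ν γ j) (H * Q γ * Hᵀ + (1 - γ)⁻¹ • R))
    (α : ℝ → Fin N → ℝ)
    (hα : ∀ γ j, α γ j = w γ j / ∑ k, w γ k) :
    ∀ j, Tendsto (fun γ => α γ j) (nhdsWithin 0 (Set.Ioo 0 1))
      (nhds (gpdf y (H *ᵥ xp j) R / ∑ k, gpdf y (H *ᵥ xp k) R)) :=
  enkpf_weights_gamma_to_zero_general hN Phat H R hR xp y K hK ν hν Q hQ w hw α hα
end

section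
/- Let (π^N) be a sequence of random probability measures on ℝ^q converging almost surely weakly to a (nonrandom) probability measure π, and for each N let x^N_1,…,x^N_N be, conditionally on π^N, an iid sample from π^N. Then the empirical measures (1/N) Σ_{j=1}^N δ_{x^N_j} converge almost surely weakly to π. -/
open MeasureTheory Filter Topology Finset

section FourthMoment
variable {E : Type*} [MeasurableSpace E] (ν : Measure E) [IsProbabilityMeasure ν]

/-- Integral of a product of coordinate evaluations over a power measure factors into
moments according to multiplicities. -/
lemma integral_prod_eval {N n : ℕ} (g : E → ℝ) (t : Fin n → Fin N) :
    ∫ z : Fin N → E, ∏ s : Fin n, g (z (t s)) ∂(Measure.pi fun _ : Fin N => ν)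
      = ∏ i : Fin N, ∫ x, g x ^ (univ.filter fun s => t s = i).card ∂ν := by
  letI : MeasureSpace E := ⟨ν⟩
  have h1 : ∀ z : Fin N → E, ∏ s : Fin n, g (z (t s))
      = ∏ i : Fin N, g (z i) ^ (univ.filter fun s => t s = i).card := by
    intro z
    rw [← Finset.prod_fiberwise_of_maps_to (g := t) (fun s _ => Finset.mem_univ (t s))
      (fun s => g (z (t s)))]
    refine Finset.prod_congr rfl fun i _ => ?_
    rw [Finset.prod_congr rfl (g := fun _ => g (z i)) fun s hs => by
      rw [(Finset.mem_filter.mp hs).2], Finset.prod_const]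
  simp_rw [h1]
  exact integral_fintype_prod_eq_prod (ι := Fin N)
    (fun i x => g x ^ (univ.filter fun s => t s = i).card)

end FourthMoment

section FM2
variable {E : Type*} [MeasurableSpace E] (ν : Measure E) [IsProbabilityMeasure ν]

lemma fourth_moment_bound (N : ℕ) (g : E → ℝ) (hg : Measurable g) (C : ℝ)
    (hgC : ∀ x, |g x| ≤ C) (hmean : ∫ x, g x ∂ν = 0) :
    ∫ z : Fin N → E, (∑ j : Fin N, g (z j)) ^ 4 ∂(Measure.pi fun _ : Fin N => ν)
      ≤ 16 * (N : ℝ) ^ 2 * C ^ 4 := by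
  classical
  have hne : Nonempty E := by
    by_contra hempty
    have h1 : ν Set.univ = 1 := measure_univ
    rw [Set.univ_eq_empty_iff.mpr (not_nonempty_iff.mp hempty)] at h1
    simp at h1
  have hC0 : 0 ≤ C := le_trans (abs_nonneg _) (hgC (Classical.arbitrary E))
  set P : (Fin 4 → Fin N) → Prop := fun t => ∀ s, ∃ s', s' ≠ s ∧ t s' = t s with hP
  -- moments are bounded
  have hgm : ∀ c : ℕ, Integrable (fun x => g x ^ c) ν := by
    intro c
    refine (integrable_const (C ^ c)).mono' ((hg.pow_const c).aestronglyMeasurable) ?_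
    filter_upwards with x
    rw [Real.norm_eq_abs, abs_pow]
    exact pow_le_pow_left₀ (abs_nonneg _) (hgC x) c
  have hmom : ∀ c : ℕ, |∫ x, g x ^ c ∂ν| ≤ C ^ c := by
    intro c
    rw [← Real.norm_eq_abs]
    refine le_trans (norm_integral_le_integral_norm _) ?_
    have : ∫ x, ‖g x ^ c‖ ∂ν ≤ ∫ _x, C ^ c ∂ν := by
      refine integral_mono (hgm c).norm (integrable_const _) fun x => ?_
      rw [Real.norm_eq_abs, abs_pow]
      exact pow_le_pow_left₀ (abs_nonneg _) (hgC x) c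
    simpa using this
  -- expand the fourth power into a sum over 4-tuples
  have hexp : ∀ z : Fin N → E, (∑ j : Fin N, g (z j)) ^ 4
      = ∑ t : Fin 4 → Fin N, ∏ s : Fin 4, g (z (t s)) := by
    intro z
    rw [Finset.sum_pow' univ (fun j => g (z j)) 4]
    rw [Fintype.piFinset_univ]
  have hint : ∀ t : Fin 4 → Fin N,
      Integrable (fun z : Fin N → E => ∏ s : Fin 4, g (z (t s)))
        (Measure.pi fun _ : Fin N => ν) := by
    intro t
    refine (integrable_const (C ^ 4)).mono'
      (Finset.aestronglyMeasurable_fun_prod _ fun s _ =>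
        ((hg.comp (measurable_pi_apply (t s))).aestronglyMeasurable)) ?_
    filter_upwards with z
    rw [Real.norm_eq_abs, Finset.abs_prod]
    calc ∏ s : Fin 4, |g (z (t s))| ≤ ∏ _s : Fin 4, C :=
          Finset.prod_le_prod (fun s _ => abs_nonneg _) (fun s _ => hgC _)
      _ = C ^ 4 := by simp [Finset.prod_const]
  have hsplit : ∫ z : Fin N → E, (∑ j : Fin N, g (z j)) ^ 4 ∂(Measure.pi fun _ : Fin N => ν)
      = ∑ t : Fin 4 → Fin N, ∫ z : Fin N → E, ∏ s : Fin 4, g (z (t s))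
          ∂(Measure.pi fun _ : Fin N => ν) := by
    simp_rw [hexp]
    exact integral_finset_sum _ fun t _ => hint t
  set T : (Fin 4 → Fin N) → ℝ := fun t =>
    ∫ z : Fin N → E, ∏ s : Fin 4, g (z (t s)) ∂(Measure.pi fun _ : Fin N => ν) with hT
  -- value of T via multiplicities
  have hTval : ∀ t, T t = ∏ i : Fin N, ∫ x, g x ^ (univ.filter fun s => t s = i).card ∂ν :=
    fun t => integral_prod_eval ν g t
  -- vanishing terms
  have hzero : ∀ t, ¬ P t → T t = 0 := by
    intro t ht
    simp only [hP, not_forall, not_exists, not_and] at ht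
    obtain ⟨s, hs⟩ := ht
    have hfib : (univ.filter fun s' => t s' = t s) = {s} := by
      ext s'
      simp only [Finset.mem_filter, Finset.mem_univ, true_and, Finset.mem_singleton]
      constructor
      · intro h
        by_contra hne
        exact hs s' hne h
      · rintro rfl; rfl
    rw [hTval t]
    refine Finset.prod_eq_zero (Finset.mem_univ (t s)) ?_
    rw [hfib, Finset.card_singleton]
    simpa using hmean
  -- bound on each term
  have hTbound : ∀ t, T t ≤ C ^ 4 := by
    intro t
    have h4 : (4 : ℕ) = ∑ i : Fin N, (univ.filter fun s => t s = i).card := by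
      simpa using Finset.card_eq_sum_card_fiberwise
        (f := t) (s := (univ : Finset (Fin 4))) (t := (univ : Finset (Fin N)))
        (fun x _ => Finset.mem_univ (t x))
    calc T t ≤ |T t| := le_abs_self _
      _ = ∏ i : Fin N, |∫ x, g x ^ (univ.filter fun s => t s = i).card ∂ν| := by
          rw [hTval t, Finset.abs_prod]
      _ ≤ ∏ i : Fin N, C ^ (univ.filter fun s => t s = i).card :=
          Finset.prod_le_prod (fun i _ => abs_nonneg _) (fun i _ => hmom _)
      _ = C ^ 4 := by rw [Finset.prod_pow_eq_pow_sum, ← h4]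
  -- counting the non-vanishing tuples
  have hcount : ((univ : Finset (Fin 4 → Fin N)).filter P).card ≤ 16 * N ^ 2 := by
    rcases Nat.eq_zero_or_pos N with hN | hN
    · subst hN
      refine le_trans (Finset.card_filter_le _ _) ?_
      simp
    set v : (Fin 4 → Fin N) → Fin N := fun t =>
      if h : ∃ s, t s ≠ t 0 then t h.choose else t 0 with hv
    set Φ : (Fin 4 → Fin N) → Fin N × Fin N × (Fin 4 → Bool) := fun t =>
      (t 0, v t, fun s => decide (t s = t 0)) with hΦ
    have key : ∀ t : Fin 4 → Fin N, P t → ∀ i : Fin 4, t i ≠ t 0 → t i = v t := by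
      intro t hPt i hi
      have hex : ∃ s, t s ≠ t 0 := ⟨i, hi⟩
      rw [hv]
      simp only
      rw [dif_pos hex]
      by_contra hne2
      have hc : t hex.choose ≠ t 0 := hex.choose_spec
      have h2 : ∀ a : Fin 4, 2 ≤ (univ.filter fun s' => t s' = t a).card := by
        intro a
        obtain ⟨s', hne, heq⟩ := hPt a
        exact Finset.one_lt_card.mpr ⟨s', Finset.mem_filter.mpr ⟨Finset.mem_univ _, heq⟩,
          a, Finset.mem_filter.mpr ⟨Finset.mem_univ _, rfl⟩, hne⟩
      set F0 := (univ.filter fun s' => t s' = t 0) with hF0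
      set Fi := (univ.filter fun s' => t s' = t i) with hFi
      set Fc := (univ.filter fun s' => t s' = t hex.choose) with hFc
      have hd1 : Disjoint F0 Fi := by
        rw [Finset.disjoint_left]
        intro a ha hb
        exact hi (((Finset.mem_filter.mp hb).2).symm.trans (Finset.mem_filter.mp ha).2).symm.symm
      have hd2 : Disjoint (F0 ∪ Fi) Fc := by
        rw [Finset.disjoint_left]
        intro a ha hb
        rcases Finset.mem_union.mp ha with ha' | ha'
        · exact hc (((Finset.mem_filter.mp hb).2).symm.trans (Finset.mem_filter.mp ha').2)
        · exact hne2 (((Finset.mem_filter.mp ha').2).symm.trans (Finset.mem_filter.mp hb).2)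
      have hcard : (F0 ∪ Fi ∪ Fc).card = F0.card + Fi.card + Fc.card := by
        rw [Finset.card_union_of_disjoint hd2, Finset.card_union_of_disjoint hd1]
      have h6 : 6 ≤ (F0 ∪ Fi ∪ Fc).card := by
        rw [hcard]
        have e0 := h2 0
        have ei := h2 i
        have ec := h2 hex.choose
        rw [← hF0] at e0
        rw [← hFi] at ei
        rw [← hFc] at ec
        omega
      have h4' : (F0 ∪ Fi ∪ Fc).card ≤ 4 := by
        refine le_trans (Finset.card_le_univ _) ?_
        simp
      omega
    have hinj : Set.InjOn Φ ((univ : Finset (Fin 4 → Fin N)).filter P) := by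
      intro t ht t' ht' heq
      have hPt : P t := (Finset.mem_filter.mp ht).2
      have hPt' : P t' := (Finset.mem_filter.mp ht').2
      have h0 : t 0 = t' 0 := congrArg Prod.fst heq
      have h1 : v t = v t' := congrArg (fun p => p.2.1) heq
      have h2 : ∀ s, decide (t s = t 0) = decide (t' s = t' 0) :=
        fun s => congrFun (congrArg (fun p => p.2.2) heq) s
      funext i
      by_cases hti : t i = t 0
      · have hd : decide (t' i = t' 0) = true := by rw [← h2]; simp [hti]
        have h' : t' i = t' 0 := of_decide_eq_true hd
        rw [hti, h0, ← h']
      · have hd : decide (t' i = t' 0) = false := by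
          rw [← h2]; simp [hti]
        have h' : ¬ t' i = t' 0 := of_decide_eq_false hd
        rw [key t hPt i hti, key t' hPt' i h', h1]
    have hle := Finset.card_le_card_of_injOn Φ (fun _ _ => Finset.mem_univ _) hinj
    have hcu : (univ : Finset (Fin N × Fin N × (Fin 4 → Bool))).card = N * (N * 16) := by
      simp [Finset.card_univ]
    rw [hcu] at hle
    nlinarith [hle]
  -- put everything together
  calc ∫ z : Fin N → E, (∑ j : Fin N, g (z j)) ^ 4 ∂(Measure.pi fun _ : Fin N => ν)
      = ∑ t : Fin 4 → Fin N, T t := hsplit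
    _ = ∑ t ∈ univ.filter P, T t := by
        rw [← Finset.sum_filter_add_sum_filter_not univ P T,
          Finset.sum_eq_zero (fun t ht => hzero t (Finset.mem_filter.mp ht).2), add_zero]
    _ ≤ (univ.filter P).card • (C ^ 4) :=
        Finset.sum_le_card_nsmul _ _ _ (fun t _ => hTbound t)
    _ = ((univ.filter P).card : ℝ) * C ^ 4 := nsmul_eq_mul _ _
    _ ≤ (16 * (N : ℝ) ^ 2) * C ^ 4 := by
        refine mul_le_mul_of_nonneg_right ?_ (pow_nonneg hC0 4)
        exact_mod_cast hcount
    _ = 16 * (N : ℝ) ^ 2 * C ^ 4 := by ring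

lemma integral_coord (N : ℕ) (j : Fin N) (f : E → ℝ) :
    ∫ z : Fin N → E, f (z j) ∂(Measure.pi fun _ : Fin N => ν) = ∫ x, f x ∂ν := by
  classical
  have h1 := integral_prod_eval ν f (fun _ : Fin 1 => j)
  have h2 : ∀ z : Fin N → E, ∏ _s : Fin 1, f (z j) = f (z j) := by
    intro z; simp
  simp_rw [h2] at h1
  rw [h1]
  rw [Finset.prod_eq_single j]
  · have : (univ.filter fun _s : Fin 1 => j = j) = univ := by simp
    rw [this]
    simp
  · intro i _ hij
    have : (univ.filter fun _s : Fin 1 => j = i) = ∅ := by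
      simp [Finset.filter_eq_empty_iff]
      exact fun h => hij h.symm
    rw [this]
    simp
  · intro hju
    exact absurd (Finset.mem_univ j) hju

lemma fourth_moment_centered (N : ℕ) (hN : 1 ≤ N) (f : E → ℝ) (hf : Measurable f) (C : ℝ)
    (hfC : ∀ x, |f x| ≤ C) :
    ∫ z : Fin N → E, ((N : ℝ)⁻¹ * ∑ j : Fin N, f (z j) - ∫ x, f x ∂ν) ^ 4
        ∂(Measure.pi fun _ : Fin N => ν) ≤ 256 * C ^ 4 / (N : ℝ) ^ 2 := by
  have hNne : (N : ℝ) ≠ 0 := Nat.cast_ne_zero.mpr (by omega)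
  set c : ℝ := ∫ x, f x ∂ν with hc
  have hfint : Integrable f ν := by
    refine (integrable_const C).mono' hf.aestronglyMeasurable ?_
    filter_upwards with x
    rw [Real.norm_eq_abs]; exact hfC x
  have hcC : |c| ≤ C := by
    rw [hc, ← Real.norm_eq_abs]
    refine le_trans (norm_integral_le_integral_norm _) ?_
    have : ∫ x, ‖f x‖ ∂ν ≤ ∫ _x, C ∂ν :=
      integral_mono hfint.norm (integrable_const _) fun x => by
        rw [Real.norm_eq_abs]; exact hfC x
    simpa using this
  set g : E → ℝ := fun x => f x - c with hg
  have hgmeas : Measurable g := hf.sub measurable_const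
  have hgC : ∀ x, |g x| ≤ 2 * C := by
    intro x
    calc |f x - c| ≤ |f x| + |c| := abs_sub _ _
      _ ≤ C + C := add_le_add (hfC x) hcC
      _ = 2 * C := by ring
  have hgmean : ∫ x, g x ∂ν = 0 := by
    rw [hg]
    rw [integral_sub hfint (integrable_const _)]
    simp [hc]
  have hpt : ∀ z : Fin N → E, ((N : ℝ)⁻¹ * ∑ j : Fin N, f (z j) - c) ^ 4
      = ((N : ℝ)⁻¹) ^ 4 * (∑ j : Fin N, g (z j)) ^ 4 := by
    intro z
    rw [← mul_pow]
    congr 1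
    rw [hg]
    simp only
    rw [Finset.sum_sub_distrib, Finset.sum_const, Finset.card_univ, Fintype.card_fin,
      nsmul_eq_mul]
    field_simp
  simp_rw [hpt]
  rw [integral_const_mul]
  have hb := fourth_moment_bound ν N g hgmeas (2 * C) hgC hgmean
  calc ((N : ℝ)⁻¹) ^ 4 * ∫ z : Fin N → E, (∑ j : Fin N, g (z j)) ^ 4
          ∂(Measure.pi fun _ : Fin N => ν)
      ≤ ((N : ℝ)⁻¹) ^ 4 * (16 * (N : ℝ) ^ 2 * (2 * C) ^ 4) := by
        refine mul_le_mul_of_nonneg_left hb (by positivity)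
    _ = 256 * C ^ 4 / (N : ℝ) ^ 2 := by
        field_simp
        ring

end FM2

section Helpers

lemma expand_four {E : Type*} [MeasurableSpace E] (ν : Measure E) [IsProbabilityMeasure ν]
    (a : E → ℝ) (ha : Measurable a) (C : ℝ) (haC : ∀ x, |a x| ≤ C) (c : ℝ) :
    ∫ x, (a x - c) ^ 4 ∂ν
      = c ^ 0 * ∫ x, (a x) ^ 4 ∂ν - 4 * (c ^ 1 * ∫ x, (a x) ^ 3 ∂ν)
        + 6 * (c ^ 2 * ∫ x, (a x) ^ 2 ∂ν) - 4 * (c ^ 3 * ∫ x, (a x) ^ 1 ∂ν)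
        + c ^ 4 * ∫ x, (a x) ^ 0 ∂ν := by
  have hint : ∀ k : ℕ, Integrable (fun x => (a x) ^ k) ν := by
    intro k
    refine (integrable_const (C ^ k)).mono' ((ha.pow_const k).aestronglyMeasurable) ?_
    filter_upwards with x
    rw [Real.norm_eq_abs, abs_pow]
    exact pow_le_pow_left₀ (abs_nonneg _) (haC x) k
  rw [show (fun x => (a x - c) ^ 4)
      = fun x => (a x) ^ 4 - 4 * c * (a x) ^ 3 + 6 * c ^ 2 * (a x) ^ 2
        - 4 * c ^ 3 * (a x) ^ 1 + c ^ 4 * (a x) ^ 0 from funext fun x => by ring]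
  have i1 : Integrable (fun x => (a x) ^ 4 - 4 * c * (a x) ^ 3) ν :=
    (hint 4).sub ((hint 3).const_mul _)
  have i2 : Integrable (fun x => (a x) ^ 4 - 4 * c * (a x) ^ 3 + 6 * c ^ 2 * (a x) ^ 2) ν :=
    i1.add ((hint 2).const_mul _)
  have i3 : Integrable (fun x => (a x) ^ 4 - 4 * c * (a x) ^ 3 + 6 * c ^ 2 * (a x) ^ 2
      - 4 * c ^ 3 * (a x) ^ 1) ν :=
    i2.sub ((hint 1).const_mul _)
  rw [integral_add i3 ((hint 0).const_mul (c ^ 4)),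
    integral_sub i2 ((hint 1).const_mul (4 * c ^ 3)),
    integral_add i1 ((hint 2).const_mul (6 * c ^ 2)),
    integral_sub (hint 4) ((hint 3).const_mul (4 * c)),
    integral_const_mul, integral_const_mul, integral_const_mul, integral_const_mul]
  ring

lemma tendsto_zero_of_pow_four {u : ℕ → ℝ} (h : Tendsto (fun n => (u n) ^ 4) atTop (𝓝 0)) :
    Tendsto u atTop (𝓝 0) := by
  rw [Metric.tendsto_atTop] at h ⊢
  intro ε hε
  obtain ⟨M, hM⟩ := h (ε ^ 4) (by positivity)
  refine ⟨M, fun n hn => ?_⟩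
  have h1 := hM n hn
  rw [Real.dist_eq, sub_zero] at h1 ⊢
  have h2 : |u n| ^ 4 < ε ^ 4 := by rwa [← abs_pow]
  exact lt_of_pow_lt_pow_left₀ 4 (le_of_lt hε) h2

end Helpers

/-- If random probability measures `π^N` converge almost surely weakly to a nonrandom
probability measure `π`, and for each `N` the points `x^N_1, …, x^N_N` form,
conditionally on `π^N`, an iid sample from `π^N`, then the empirical measures
`(1/N) ∑ δ_{x^N_j}` converge almost surely weakly to `π`. -/
theorem empirical_measures_consistent {q : ℕ}
    {Ω : Type*} (m : MeasurableSpace Ω) [m0 : MeasurableSpace Ω] (μ : Measure Ω) [IsProbabilityMeasure μ]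
    (π : ℕ → Ω → Measure (Fin q → ℝ))
    (hπprob : ∀ N ω, IsProbabilityMeasure (π N ω))
    (πlim : Measure (Fin q → ℝ)) [IsProbabilityMeasure πlim]
    -- the σ-algebra generated by the random measures
    (hm : m ≤ m0)
    (hπmeas : ∀ N, Measurable[m] (π N))
    -- the samples
    (X : ℕ → ℕ → Ω → (Fin q → ℝ))
    (hXmeas : ∀ N j, Measurable (X N j))
    -- conditionally on the random measures, `(X N j)_{j < N}` is iid with law `π N`
    (hcond : ∀ (N : ℕ) (f : (Fin N → (Fin q → ℝ)) → ℝ), Measurable f →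
        (∃ C, ∀ z, |f z| ≤ C) →
        μ[(fun ω => f (fun j => X N j ω)) | m]
          =ᵐ[μ] fun ω => ∫ z, f z ∂(Measure.pi fun _ : Fin N => π N ω))
    -- almost sure weak convergence of `π^N` to `π`
    (hweak : ∀ h : (Fin q → ℝ) → ℝ, Continuous h → (∃ C, ∀ x, |h x| ≤ C) →
        ∀ᵐ ω ∂μ, Tendsto (fun N => ∫ x, h x ∂(π N ω)) atTop (nhds (∫ x, h x ∂πlim))) :
    -- conclusion: a.s. weak convergence of the empirical measures
    ∀ h : (Fin q → ℝ) → ℝ, Continuous h → (∃ C, ∀ x, |h x| ≤ C) →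
      ∀ᵐ ω ∂μ, Tendsto (fun N : ℕ => (N : ℝ)⁻¹ * ∑ j : Fin N, h (X N j ω))
        atTop (nhds (∫ x, h x ∂πlim)) := by
  intro h hcont hb
  obtain ⟨C, hC⟩ := hb
  have hC0 : 0 ≤ C := le_trans (abs_nonneg _) (hC fun _ => 0)
  have hhmeas : Measurable h := hcont.measurable
  haveI : SigmaFinite (μ.trim hm) := by
    haveI := isFiniteMeasure_trim (μ := μ) hm
    infer_instance
  set SX : ℕ → Ω → ℝ := fun N ω => (N : ℝ)⁻¹ * ∑ j : Fin N, h (X N j ω) with hSX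
  set fk : (k N : ℕ) → (Fin N → (Fin q → ℝ)) → ℝ :=
    fun k N z => ((N : ℝ)⁻¹ * ∑ j : Fin N, h (z j)) ^ k with hfk
  set Ek : (k N : ℕ) → Ω → ℝ := fun k N => μ[fun ω => (SX N ω) ^ k|m] with hEk
  set ρ : (N : ℕ) → Ω → Measure (Fin N → (Fin q → ℝ)) := fun N ω => Measure.pi fun _ : Fin N => π N ω with hρ
  -- basic bounds
  have hbase : ∀ (N : ℕ) (z : Fin N → (Fin q → ℝ)), |(N : ℝ)⁻¹ * ∑ j : Fin N, h (z j)| ≤ C := by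
    intro N z
    rcases Nat.eq_zero_or_pos N with hN | hN
    · subst hN; simpa using hC0
    have hNne : (N : ℝ) ≠ 0 := Nat.cast_ne_zero.mpr (by omega)
    rw [abs_mul, abs_inv, Nat.abs_cast]
    have h1 : |∑ j : Fin N, h (z j)| ≤ ∑ _j : Fin N, C :=
      le_trans (Finset.abs_sum_le_sum_abs _ _) (Finset.sum_le_sum fun j _ => hC _)
    rw [Finset.sum_const, Finset.card_univ, Fintype.card_fin, nsmul_eq_mul] at h1
    calc (N : ℝ)⁻¹ * |∑ j : Fin N, h (z j)| ≤ (N : ℝ)⁻¹ * ((N : ℝ) * C) :=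
          mul_le_mul_of_nonneg_left h1 (by positivity)
      _ = C := by field_simp
  have hfkb : ∀ k N z, |fk k N z| ≤ C ^ k := by
    intro k N z
    rw [hfk]
    simp only
    rw [abs_pow]
    exact pow_le_pow_left₀ (abs_nonneg _) (hbase N z) k
  have hfkmeas : ∀ k N, Measurable (fk k N) := by
    intro k N
    apply Measurable.pow_const
    exact (Finset.measurable_sum univ fun (j : Fin N) _ => hhmeas.comp (measurable_pi_apply j)).const_mul _
  have hSXmeasm : ∀ N, Measurable[m0] (SX N) := by
    intro N
    rw [hSX]
    exact (Finset.measurable_sum univ fun (j : Fin N) _ => hhmeas.comp (hXmeas N j)).const_mul _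
  have hSXmeas : ∀ N, Measurable[m0] (SX N) := fun N => hSXmeasm N
  have hSXb : ∀ N ω, |SX N ω| ≤ C := fun N ω => hbase N _
  have hbint : ∀ (F : Ω → ℝ) (c : ℝ), AEStronglyMeasurable[m0] F μ → (∀ᵐ ω ∂μ, |F ω| ≤ c) →
      Integrable F μ := fun F c hFm hFb =>
    (integrable_const c).mono' hFm (by filter_upwards [hFb] with ω hω; rwa [Real.norm_eq_abs])
  have hSkint : ∀ N k, Integrable (fun ω => (SX N ω) ^ k) μ := by
    intro N k
    refine hbint _ (C ^ k) ?_ ?_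
    · exact ((hSXmeas N).pow_const k).aestronglyMeasurable
    · exact ae_of_all _ fun ω => by
        rw [abs_pow]; exact pow_le_pow_left₀ (abs_nonneg _) (hSXb N ω) k
  -- conditional moments
  have hEkI : ∀ N k, Ek k N =ᵐ[μ] fun ω => ∫ z, fk k N z ∂(ρ N ω) :=
    fun N k => hcond N (fk k N) (hfkmeas k N) ⟨C ^ k, fun z => hfkb k N z⟩
  have hpiprob : ∀ N ω, IsProbabilityMeasure (ρ N ω) := by
    intro N ω
    haveI := hπprob N ω
    rw [hρ]
    infer_instance
  have hfkint : ∀ N k ω, Integrable (fk k N) (ρ N ω) := by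
    intro N k ω
    haveI := hpiprob N ω
    exact (integrable_const (C ^ k)).mono' (hfkmeas k N).aestronglyMeasurable
      (ae_of_all _ fun z => by rw [Real.norm_eq_abs]; exact hfkb k N z)
  have hIb : ∀ N k ω, |∫ z, fk k N z ∂(ρ N ω)| ≤ C ^ k := by
    intro N k ω
    haveI := hpiprob N ω
    rw [← Real.norm_eq_abs]
    refine le_trans (norm_integral_le_integral_norm _) ?_
    have h2 : ∫ z, ‖fk k N z‖ ∂(ρ N ω) ≤ ∫ _z, C ^ k ∂(ρ N ω) :=
      integral_mono (hfkint N k ω).norm (integrable_const _) fun z => by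
        rw [Real.norm_eq_abs]; exact hfkb k N z
    simpa using h2
  have hEkb : ∀ N k, ∀ᵐ ω ∂μ, |Ek k N ω| ≤ C ^ k := by
    intro N k
    filter_upwards [hEkI N k] with ω hω
    rw [hω]
    exact hIb N k ω
  have hEkm : ∀ k N, StronglyMeasurable[m] (Ek k N) := by
    intro k N
    rw [hEk]
    exact stronglyMeasurable_condExp
  -- identification of the conditional first moment
  have hcval : ∀ N : ℕ, 1 ≤ N → ∀ ω, (∫ z, fk 1 N z ∂(ρ N ω)) = ∫ x, h x ∂(π N ω) := by
    intro N hN ω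
    have hNne : (N : ℝ) ≠ 0 := Nat.cast_ne_zero.mpr (by omega)
    haveI := hπprob N ω
    haveI := hpiprob N ω
    rw [hfk]
    simp only [pow_one]
    rw [integral_const_mul]
    rw [integral_finset_sum univ (fun (j : Fin N) _ => ?_)]
    · have hco : ∀ j : Fin N, (∫ z : Fin N → (Fin q → ℝ), h (z j) ∂(ρ N ω))
          = ∫ x, h x ∂(π N ω) := fun j => integral_coord (π N ω) N j h
      rw [Finset.sum_congr rfl fun (j : Fin N) _ => hco j, Finset.sum_const,
        Finset.card_univ, Fintype.card_fin, nsmul_eq_mul]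
      rw [← mul_assoc, inv_mul_cancel₀ hNne, one_mul]
    · refine (integrable_const C).mono'
        ((hhmeas.comp (measurable_pi_apply j)).aestronglyMeasurable) ?_
      exact ae_of_all _ fun z => by rw [Real.norm_eq_abs]; exact hC _
  -- the conditional fourth-moment bound
  have key : ∀ N : ℕ, 1 ≤ N →
      ∫ ω, (SX N ω - Ek 1 N ω) ^ 4 ∂μ ≤ 256 * C ^ 4 / (N : ℝ) ^ 2 := by
    intro N hN
    have hNne : (N : ℝ) ≠ 0 := Nat.cast_ne_zero.mpr (by omega)
    have hE1m : ∀ jj : ℕ, StronglyMeasurable[m] (fun ω => (Ek 1 N ω) ^ jj) :=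
      fun jj => (hEkm 1 N).pow jj
    have hE1bj : ∀ jj : ℕ, ∀ᵐ ω ∂μ, ‖(Ek 1 N ω) ^ jj‖ ≤ C ^ jj := by
      intro jj
      filter_upwards [hEkb N 1] with ω hω
      rw [Real.norm_eq_abs, abs_pow]
      exact pow_le_pow_left₀ (abs_nonneg _) (by simpa using hω) jj
    have hPi : ∀ jj kk : ℕ, Integrable (fun ω => (Ek 1 N ω) ^ jj * (SX N ω) ^ kk) μ := by
      intro jj kk
      refine hbint _ (C ^ jj * C ^ kk) ?_ ?_
      · exact ((((hEkm 1 N).mono hm).measurable.pow_const jj).mul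
          ((hSXmeas N).pow_const kk)).aestronglyMeasurable
      · filter_upwards [hEkb N 1] with ω hω
        rw [abs_mul, abs_pow, abs_pow]
        exact mul_le_mul (pow_le_pow_left₀ (abs_nonneg _) (by simpa using hω) jj)
          (pow_le_pow_left₀ (abs_nonneg _) (hSXb N ω) kk) (by positivity) (by positivity)
    have hQi : ∀ jj kk : ℕ, Integrable (fun ω => (Ek 1 N ω) ^ jj * Ek kk N ω) μ := by
      intro jj kk
      refine hbint _ (C ^ jj * C ^ kk) ?_ ?_
      · exact ((((hEkm 1 N).mono hm).measurable.pow_const jj).mul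
          ((hEkm kk N).mono hm).measurable).aestronglyMeasurable
      · filter_upwards [hEkb N 1, hEkb N kk] with ω hω hω'
        rw [abs_mul, abs_pow]
        exact mul_le_mul (pow_le_pow_left₀ (abs_nonneg _) (by simpa using hω) jj)
          hω' (abs_nonneg _) (by positivity)
    have hpull : ∀ jj kk : ℕ, ∫ ω, (Ek 1 N ω) ^ jj * (SX N ω) ^ kk ∂μ
        = ∫ ω, (Ek 1 N ω) ^ jj * Ek kk N ω ∂μ := by
      intro jj kk
      have hmul := condExp_stronglyMeasurable_mul_of_bound hm (hE1m jj) (hSkint N kk)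
        (C ^ jj) (hE1bj jj)
      calc ∫ ω, (Ek 1 N ω) ^ jj * (SX N ω) ^ kk ∂μ
          = ∫ ω, (μ[(fun ω => (Ek 1 N ω) ^ jj) * (fun ω => (SX N ω) ^ kk)|m]) ω ∂μ :=
            (integral_condExp hm).symm
        _ = ∫ ω, ((fun ω => (Ek 1 N ω) ^ jj) * μ[fun ω => (SX N ω) ^ kk|m]) ω ∂μ :=
            integral_congr_ae hmul
        _ = ∫ ω, (Ek 1 N ω) ^ jj * Ek kk N ω ∂μ := rfl
    -- split the fourth power
    have i1 : Integrable (fun ω => (Ek 1 N ω) ^ 0 * (SX N ω) ^ 4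
        - 4 * ((Ek 1 N ω) ^ 1 * (SX N ω) ^ 3)) μ := (hPi 0 4).sub ((hPi 1 3).const_mul _)
    have i2 : Integrable (fun ω => (Ek 1 N ω) ^ 0 * (SX N ω) ^ 4
        - 4 * ((Ek 1 N ω) ^ 1 * (SX N ω) ^ 3)
        + 6 * ((Ek 1 N ω) ^ 2 * (SX N ω) ^ 2)) μ := i1.add ((hPi 2 2).const_mul _)
    have i3 : Integrable (fun ω => (Ek 1 N ω) ^ 0 * (SX N ω) ^ 4
        - 4 * ((Ek 1 N ω) ^ 1 * (SX N ω) ^ 3)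
        + 6 * ((Ek 1 N ω) ^ 2 * (SX N ω) ^ 2)
        - 4 * ((Ek 1 N ω) ^ 3 * (SX N ω) ^ 1)) μ := i2.sub ((hPi 3 1).const_mul _)
    have j1 : Integrable (fun ω => (Ek 1 N ω) ^ 0 * Ek 4 N ω
        - 4 * ((Ek 1 N ω) ^ 1 * Ek 3 N ω)) μ := (hQi 0 4).sub ((hQi 1 3).const_mul _)
    have j2 : Integrable (fun ω => (Ek 1 N ω) ^ 0 * Ek 4 N ω
        - 4 * ((Ek 1 N ω) ^ 1 * Ek 3 N ω)
        + 6 * ((Ek 1 N ω) ^ 2 * Ek 2 N ω)) μ := j1.add ((hQi 2 2).const_mul _)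
    have j3 : Integrable (fun ω => (Ek 1 N ω) ^ 0 * Ek 4 N ω
        - 4 * ((Ek 1 N ω) ^ 1 * Ek 3 N ω)
        + 6 * ((Ek 1 N ω) ^ 2 * Ek 2 N ω)
        - 4 * ((Ek 1 N ω) ^ 3 * Ek 1 N ω)) μ := j2.sub ((hQi 3 1).const_mul _)
    have j4 : Integrable (fun ω => (Ek 1 N ω) ^ 0 * Ek 4 N ω
        - 4 * ((Ek 1 N ω) ^ 1 * Ek 3 N ω)
        + 6 * ((Ek 1 N ω) ^ 2 * Ek 2 N ω)
        - 4 * ((Ek 1 N ω) ^ 3 * Ek 1 N ω)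
        + (Ek 1 N ω) ^ 4 * Ek 0 N ω) μ := j3.add (hQi 4 0)
    have hsplit : ∫ ω, (SX N ω - Ek 1 N ω) ^ 4 ∂μ
        = ∫ ω, ((Ek 1 N ω) ^ 0 * Ek 4 N ω
          - 4 * ((Ek 1 N ω) ^ 1 * Ek 3 N ω)
          + 6 * ((Ek 1 N ω) ^ 2 * Ek 2 N ω)
          - 4 * ((Ek 1 N ω) ^ 3 * Ek 1 N ω)
          + (Ek 1 N ω) ^ 4 * Ek 0 N ω) ∂μ := by
      rw [show (fun ω => (SX N ω - Ek 1 N ω) ^ 4)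
          = fun ω => (Ek 1 N ω) ^ 0 * (SX N ω) ^ 4
            - 4 * ((Ek 1 N ω) ^ 1 * (SX N ω) ^ 3)
            + 6 * ((Ek 1 N ω) ^ 2 * (SX N ω) ^ 2)
            - 4 * ((Ek 1 N ω) ^ 3 * (SX N ω) ^ 1)
            + (Ek 1 N ω) ^ 4 * (SX N ω) ^ 0 from funext fun ω => by ring]
      rw [integral_add i3 (hPi 4 0), integral_sub i2 ((hPi 3 1).const_mul _),
        integral_add i1 ((hPi 2 2).const_mul _),
        integral_sub (hPi 0 4) ((hPi 1 3).const_mul _),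
        integral_const_mul, integral_const_mul, integral_const_mul,
        hpull 0 4, hpull 1 3, hpull 2 2, hpull 3 1, hpull 4 0]
      rw [integral_add j3 (hQi 4 0), integral_sub j2 ((hQi 3 1).const_mul _),
        integral_add j1 ((hQi 2 2).const_mul _),
        integral_sub (hQi 0 4) ((hQi 1 3).const_mul _),
        integral_const_mul, integral_const_mul, integral_const_mul]
    -- almost everywhere bound on the integrand
    have hGle : ∀ᵐ ω ∂μ, (Ek 1 N ω) ^ 0 * Ek 4 N ω
          - 4 * ((Ek 1 N ω) ^ 1 * Ek 3 N ω)
          + 6 * ((Ek 1 N ω) ^ 2 * Ek 2 N ω)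
          - 4 * ((Ek 1 N ω) ^ 3 * Ek 1 N ω)
          + (Ek 1 N ω) ^ 4 * Ek 0 N ω ≤ 256 * C ^ 4 / (N : ℝ) ^ 2 := by
      filter_upwards [hEkI N 0, hEkI N 1, hEkI N 2, hEkI N 3, hEkI N 4] with ω h0 h1 h2 h3 h4
      rw [h0, h1, h2, h3, h4]
      haveI := hπprob N ω
      haveI := hpiprob N ω
      have hc : (∫ z, fk 1 N z ∂(ρ N ω)) = ∫ x, h x ∂(π N ω) := hcval N hN ω
      calc (∫ z, fk 1 N z ∂(ρ N ω)) ^ 0 * ∫ z, fk 4 N z ∂(ρ N ω)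
            - 4 * ((∫ z, fk 1 N z ∂(ρ N ω)) ^ 1 * ∫ z, fk 3 N z ∂(ρ N ω))
            + 6 * ((∫ z, fk 1 N z ∂(ρ N ω)) ^ 2 * ∫ z, fk 2 N z ∂(ρ N ω))
            - 4 * ((∫ z, fk 1 N z ∂(ρ N ω)) ^ 3 * ∫ z, fk 1 N z ∂(ρ N ω))
            + (∫ z, fk 1 N z ∂(ρ N ω)) ^ 4 * ∫ z, fk 0 N z ∂(ρ N ω)
          = ∫ z, ((N : ℝ)⁻¹ * ∑ j : Fin N, h (z j) - ∫ z, fk 1 N z ∂(ρ N ω)) ^ 4 ∂(ρ N ω) := by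
            refine (expand_four (ρ N ω) (fun z => (N : ℝ)⁻¹ * ∑ j : Fin N, h (z j)) ?_ C
              (fun z => hbase N z) (∫ z, fk 1 N z ∂(ρ N ω))).symm.trans ?_
            · exact (Finset.measurable_sum univ fun (j : Fin N) _ =>
                hhmeas.comp (measurable_pi_apply j)).const_mul _
            · congr 1
        _ ≤ 256 * C ^ 4 / (N : ℝ) ^ 2 := by
            rw [hc, hρ]
            exact fourth_moment_centered (π N ω) N hN h hhmeas C hC
    calc ∫ ω, (SX N ω - Ek 1 N ω) ^ 4 ∂μ
        = ∫ ω, ((Ek 1 N ω) ^ 0 * Ek 4 N ω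
          - 4 * ((Ek 1 N ω) ^ 1 * Ek 3 N ω)
          + 6 * ((Ek 1 N ω) ^ 2 * Ek 2 N ω)
          - 4 * ((Ek 1 N ω) ^ 3 * Ek 1 N ω)
          + (Ek 1 N ω) ^ 4 * Ek 0 N ω) ∂μ := hsplit
      _ ≤ ∫ _ω, 256 * C ^ 4 / (N : ℝ) ^ 2 ∂μ := integral_mono_ae j4 (integrable_const _) hGle
      _ = 256 * C ^ 4 / (N : ℝ) ^ 2 := by simp
  -- the centered differences
  set D : ℕ → Ω → ℝ := fun N ω => SX N ω - Ek 1 N ω with hD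
  have hDmeas : ∀ N, Measurable[m0] (D N) := by
    intro N
    rw [hD]
    exact (hSXmeas N).sub ((hEkm 1 N).mono hm).measurable
  have hDb : ∀ N, ∀ᵐ ω ∂μ, |D N ω| ≤ 2 * C := by
    intro N
    filter_upwards [hEkb N 1] with ω hω
    rw [hD]
    simp only
    calc |SX N ω - Ek 1 N ω| ≤ |SX N ω| + |Ek 1 N ω| := abs_sub _ _
      _ ≤ C + C := add_le_add (hSXb N ω) (by simpa using hω)
      _ = 2 * C := by ring
  have hD4int : ∀ N, Integrable (fun ω => (D N ω) ^ 4) μ := by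
    intro N
    refine hbint _ ((2 * C) ^ 4) (((hDmeas N).pow_const 4).aestronglyMeasurable) ?_
    filter_upwards [hDb N] with ω hω
    rw [abs_pow]
    exact pow_le_pow_left₀ (abs_nonneg _) hω 4
  set g : ℕ → ENNReal := fun N => ∫⁻ ω, ENNReal.ofReal ((D N ω) ^ 4) ∂μ with hg
  have hg0 : g 0 = 0 := by
    have hs0 : SX 0 = fun _ => (0 : ℝ) := by
      funext ω
      rw [hSX]
      simp
    have he0 : Ek 1 0 = 0 := by
      rw [hEk]
      simp only
      have hz : (fun ω => SX 0 ω ^ 1) = (0 : Ω → ℝ) := by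
        funext ω
        rw [hs0]
        simp
      rw [hz, condExp_zero]
    have hD0 : ∀ ω, D 0 ω = 0 := by
      intro ω
      rw [hD]
      simp only
      rw [hs0, he0]
      simp
    rw [hg]
    simp only
    simp [hD0]
  have hgb : ∀ N, g N ≤ ENNReal.ofReal (256 * C ^ 4 / (N : ℝ) ^ 2) := by
    intro N
    rcases Nat.eq_zero_or_pos N with h0 | h1
    · subst h0
      rw [hg0]
      exact zero_le
    have heq : g N = ENNReal.ofReal (∫ ω, (D N ω) ^ 4 ∂μ) := by
      rw [hg]
      simp only
      rw [← ofReal_integral_eq_lintegral_ofReal (hD4int N) (ae_of_all _ fun ω => by positivity)]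
    rw [heq]
    exact ENNReal.ofReal_le_ofReal (key N h1)
  have htsum : ∑' N, g N ≠ ⊤ := by
    have hsum : Summable (fun N : ℕ => 256 * C ^ 4 / (N : ℝ) ^ 2) := by
      have hs : Summable (fun N : ℕ => 256 * C ^ 4 * (1 / (N : ℝ) ^ 2)) :=
        (Real.summable_one_div_nat_pow.mpr (by norm_num)).mul_left _
      simpa [div_eq_mul_inv, one_div] using hs
    refine ne_top_of_le_ne_top ?_ (ENNReal.tsum_le_tsum hgb)
    rw [← ENNReal.ofReal_tsum_of_nonneg (fun N => by positivity) hsum]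
    exact ENNReal.ofReal_ne_top
  have haefin : ∀ᵐ ω ∂μ, ∑' N, ENNReal.ofReal ((D N ω) ^ 4) ≠ ⊤ := by
    have hlt : ∫⁻ ω, ∑' N, ENNReal.ofReal ((D N ω) ^ 4) ∂μ = ∑' N, g N := by
      rw [hg]
      exact lintegral_tsum fun N =>
        (ENNReal.measurable_ofReal.comp ((hDmeas N).pow_const 4)).aemeasurable
    have hfin : ∫⁻ ω, ∑' N, ENNReal.ofReal ((D N ω) ^ 4) ∂μ ≠ ⊤ := by
      rw [hlt]
      exact htsum
    filter_upwards [ae_lt_top (Measurable.ennreal_tsum fun N =>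
      ENNReal.measurable_ofReal.comp ((hDmeas N).pow_const 4)) hfin] with ω hω
    exact hω.ne
  have hDtend : ∀ᵐ ω ∂μ, Tendsto (fun N => D N ω) atTop (𝓝 0) := by
    filter_upwards [haefin] with ω hω
    apply tendsto_zero_of_pow_four
    have h1 : Tendsto (fun N => ENNReal.ofReal ((D N ω) ^ 4)) atTop (𝓝 0) :=
      ENNReal.tendsto_atTop_zero_of_tsum_ne_top hω
    have h2 : Tendsto (fun N => (ENNReal.ofReal ((D N ω) ^ 4)).toReal) atTop
        (𝓝 ((0 : ENNReal).toReal)) := (ENNReal.tendsto_toReal (by simp)).comp h1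
    simp only [ENNReal.toReal_zero] at h2
    exact h2.congr fun N => ENNReal.toReal_ofReal (by positivity)
  -- conclusion
  have hI1eq : ∀ᵐ ω ∂μ, ∀ N, Ek 1 N ω = ∫ z, fk 1 N z ∂(ρ N ω) :=
    ae_all_iff.mpr fun N => hEkI N 1
  filter_upwards [hweak h hcont ⟨C, hC⟩, hDtend, hI1eq] with ω hw hDt hI1
  have h2 : Tendsto (fun N => D N ω + ∫ x, h x ∂(π N ω)) atTop
      (𝓝 (∫ x, h x ∂πlim)) := by
    have h3 := hDt.add hw
    rwa [zero_add] at h3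
  refine h2.congr' ?_
  filter_upwards [eventually_ge_atTop 1] with N hN1
  have hmean : Ek 1 N ω = ∫ x, h x ∂(π N ω) := by
    rw [hI1 N, hcval N hN1 ω]
  rw [← hmean, hD]
  simp only
  rw [sub_add_cancel]
end
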